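/- Let E, F be orthogonal projections on a separable complex Hilbert space H whose ranges have the same (possibly infinite) Hilbert dimension. Assume: (a) E∧F = 0; (b) for every unit vector e ∈ ran E one has Fe ≠ 0, and for every unit vector f ∈ ran F one has Ef ≠ 0; (c) the positive operator EFE restricted to ran E has pure point spectrum, i.e. ran E admits an orthonormal basis of eigenvectors of EFE. Then there exists an orthonormal basis {e_j : j ∈ J} of ran E (so that E = ∑_j P_{e_j}, strongly convergent) such that the vectors f_j := Fe_j/‖Fe_j‖ form an orthonormal basis of ran F (so that F = ∑_j P_{f_j}, strongly convergent) and P_{f_j}P_{e_k} = 0 for all j ≠ k while P_{f_j}P_{e_j} ≠ 0 for all j; moreover, given the decomposition {P_{e_j}}, the decomposition {P_{f_j}} of F with these properties is unique. -/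

import Mathlib

/-!
Since `eⱼ ∈ ran E` and `EFE eⱼ = μⱼ eⱼ`, we get `⟪eᵢ, F eⱼ⟫ = ⟪eᵢ, EFE eⱼ⟫ = μⱼ δᵢⱼ`, and
`⟪F eᵢ, F eⱼ⟫ = ⟪eᵢ, F eⱼ⟫` because `F` is an orthogonal projection. Hence the normalised vectors
`fⱼ = F eⱼ / ‖F eⱼ‖` are orthonormal, `fⱼ ⊥ eₖ` for `j ≠ k`, and `⟪fⱼ, eⱼ⟫ = ‖F eⱼ‖ ≠ 0`.
A vector `u ∈ ran F` orthogonal to all `fⱼ` satisfies `⟪eⱼ, u⟫ = ⟪F eⱼ, u⟫ = 0`, so `u ⊥ ran E`,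
i.e. `E u = 0`, which forces `u = 0`: the `fⱼ` are total in `ran F`. For uniqueness, a unit
vector `gⱼ ∈ ran F` orthogonal to `eₖ` for all `k ≠ j` is then orthogonal to `fₖ` for all
`k ≠ j`, hence a unimodular multiple of `fⱼ`, and `P_{gⱼ} = P_{fⱼ}`.
-/

/-- An orthogonal projection: a bounded idempotent self-adjoint operator. -/
def IsOrthogonalProjection {H : Type*} [NormedAddCommGroup H] [InnerProductSpace ℂ H]
    [CompleteSpace H] (E : H →L[ℂ] H) : Prop :=
  IsSelfAdjoint E ∧ E * E = E

/-- The rank-one orthogonal projection `P_x : z ↦ ⟪x, z⟫ • x` determined by a (unit) vector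
`x`. -/
noncomputable def rankOneProj {H : Type*} [NormedAddCommGroup H] [InnerProductSpace ℂ H]
    (x : H) : H →L[ℂ] H :=
  (innerSL ℂ x).smulRight x

open scoped InnerProductSpace
open InnerProductSpace (rankOne)
open Submodule (span)

section RankOneProj

variable {H : Type*} [NormedAddCommGroup H] [InnerProductSpace ℂ H]

theorem rankOneProj_eq_rankOne (x : H) : rankOneProj x = rankOne ℂ x x := rfl

theorem rankOneProj_mul_eq_zero_iff {x y : H} (hx : x ≠ 0) (hy : y ≠ 0) :
    rankOneProj x * rankOneProj y = 0 ↔ ⟪x, y⟫_ℂ = 0 := by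
  simp [rankOneProj_eq_rankOne, ContinuousLinearMap.mul_def,
    InnerProductSpace.rankOne_comp_rankOne, hx, hy]

theorem rankOneProj_smul {c : ℂ} (hc : ‖c‖ = 1) (x : H) : rankOneProj (c • x) = rankOneProj x := by
  ext z
  simp [rankOneProj_eq_rankOne, smul_smul, Complex.mul_conj', hc]

end RankOneProj

section Orthonormal

variable {𝕜 E ι : Type*} [RCLike 𝕜] [NormedAddCommGroup E] [InnerProductSpace 𝕜 E]

theorem orthonormal_normalize [NormedSpace ℝ E] [IsScalarTower ℝ 𝕜 E] {v : ι → E}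
    (hv : ∀ i, v i ≠ 0) (h : Pairwise fun i j => ⟪v i, v j⟫_𝕜 = 0) :
    Orthonormal 𝕜 fun i => ‖v i‖⁻¹ • v i := by
  refine ⟨fun i => ?_, fun i j hij => ?_⟩
  · rw [norm_smul, norm_inv, norm_norm, inv_mul_cancel₀ (norm_ne_zero_iff.mpr (hv i))]
  · simp [← algebraMap_smul 𝕜, inner_smul_left, inner_smul_right, h hij]

theorem Submodule.mem_orthogonal_span_range_iff {v : ι → E} {u : E} :
    u ∈ (span 𝕜 (Set.range v))ᗮ ↔ ∀ i, ⟪v i, u⟫_𝕜 = 0 := by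
  rw [← Submodule.span_singleton_le_iff_mem, ← Submodule.isOrtho_iff_le, Submodule.isOrtho_comm,
    Submodule.isOrtho_span]
  simp

theorem Submodule.topologicalClosure_eq_of_orthogonal_inf_eq_bot [CompleteSpace E]
    {K U : Submodule 𝕜 E} (hU : IsClosed (U : Set E)) (hKU : K ≤ U) (h : Kᗮ ⊓ U = ⊥) :
    K.topologicalClosure = U := by
  have := Submodule.sup_orthogonal_inf_of_hasOrthogonalProjection
    (K.topologicalClosure_minimal hKU hU)
  rwa [Submodule.orthogonal_closure, h, sup_bot_eq] at this

theorem Orthonormal.eq_inner_smul_of_inner_eq_zero {v : ι → E} (hv : Orthonormal 𝕜 v)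
    {U : Submodule 𝕜 E} (hspan : (span 𝕜 (Set.range v)).topologicalClosure = U) {x : E}
    (hx : x ∈ U) {j : ι} (h : ∀ i ≠ j, ⟪v i, x⟫_𝕜 = 0) : x = ⟪v j, x⟫_𝕜 • v j := by
  have hvj : v j ∈ U :=
    hspan ▸ (span 𝕜 (Set.range v)).le_topologicalClosure (Submodule.subset_span ⟨j, rfl⟩)
  have hperp : x - ⟪v j, x⟫_𝕜 • v j ∈ Uᗮ := by
    rw [← hspan, Submodule.orthogonal_closure, Submodule.mem_orthogonal_span_range_iff]
    intro i
    rcases eq_or_ne i j with rfl | hij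
    · simp [inner_sub_right, inner_smul_right, hv.1 i]
    · simp [inner_sub_right, inner_smul_right, h i hij, hv.2 hij]
  have : x - ⟪v j, x⟫_𝕜 • v j ∈ U ⊓ Uᗮ := ⟨U.sub_mem hx (U.smul_mem _ hvj), hperp⟩
  rwa [U.inf_orthogonal_eq_bot, Submodule.mem_bot, sub_eq_zero] at this

end Orthonormal

theorem Submodule.disjoint_ker_of_forall_norm_eq_one {𝕜 E F : Type*} [RCLike 𝕜]
    [NormedAddCommGroup E] [NormedSpace 𝕜 E] [AddCommGroup F] [Module 𝕜 F] {U : Submodule 𝕜 E}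
    {T : E →ₗ[𝕜] F} (h : ∀ x ∈ U, ‖x‖ = 1 → T x ≠ 0) : Disjoint U (LinearMap.ker T) := by
  refine Submodule.disjoint_def.mpr fun u hu hTu => ?_
  by_contra hne
  refine h _ (U.smul_mem (‖u‖⁻¹ : 𝕜) hu) (norm_smul_inv_norm hne) ?_
  rw [map_smul, LinearMap.mem_ker.mp hTu, smul_zero]

theorem Orthonormal.rankOneProj_eq_of_inner_eq_zero {H ι : Type*} [NormedAddCommGroup H]
    [InnerProductSpace ℂ H] {v : ι → H} (hv : Orthonormal ℂ v) {U : Submodule ℂ H}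
    (hspan : (span ℂ (Set.range v)).topologicalClosure = U) {x : H} (hx : x ∈ U) (hx1 : ‖x‖ = 1)
    {j : ι} (h : ∀ i ≠ j, ⟪v i, x⟫_ℂ = 0) : rankOneProj x = rankOneProj (v j) := by
  have hxj := hv.eq_inner_smul_of_inner_eq_zero hspan hx h
  rw [hxj, norm_smul, hv.1 j, mul_one] at hx1
  rw [hxj, rankOneProj_smul hx1]

namespace IsOrthogonalProjection

variable {H : Type*} [NormedAddCommGroup H] [InnerProductSpace ℂ H] [CompleteSpace H]
  {E : H →L[ℂ] H}

theorem apply_apply (hE : IsOrthogonalProjection E) (x : H) : E (E x) = E x :=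
  congrArg (fun T : H →L[ℂ] H => T x) hE.2

theorem apply_eq_self_of_mem_range (hE : IsOrthogonalProjection E) {x : H}
    (hx : x ∈ LinearMap.range (E : H →ₗ[ℂ] H)) : E x = x := by
  obtain ⟨y, rfl⟩ := hx
  exact hE.apply_apply y

theorem inner_apply_left (hE : IsOrthogonalProjection E) (x y : H) :
    ⟪E x, y⟫_ℂ = ⟪x, E y⟫_ℂ :=
  ContinuousLinearMap.isSelfAdjoint_iff_isSymmetric.mp hE.1 x y

theorem inner_apply_apply (hE : IsOrthogonalProjection E) (x y : H) :
    ⟪E x, E y⟫_ℂ = ⟪x, E y⟫_ℂ := by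
  rw [hE.inner_apply_left, hE.apply_apply]

theorem isClosed_range (hE : IsOrthogonalProjection E) :
    IsClosed (LinearMap.range (E : H →ₗ[ℂ] H) : Set H) :=
  ContinuousLinearMap.IsIdempotentElem.isClosed_range hE.2

theorem orthogonal_range (hE : IsOrthogonalProjection E) :
    (LinearMap.range (E : H →ₗ[ℂ] H))ᗮ = LinearMap.ker (E : H →ₗ[ℂ] H) := by
  simpa [hE.1.adjoint_eq] using E.orthogonal_range

theorem inner_apply_eq_of_compression_eq_smul (hE : IsOrthogonalProjection E) (F : H →L[ℂ] H)
    {x y : H} (hx : x ∈ LinearMap.range (E : H →ₗ[ℂ] H))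
    (hy : y ∈ LinearMap.range (E : H →ₗ[ℂ] H)) {μ : ℂ} (hμ : (E * F * E) y = μ • y) :
    ⟪x, F y⟫_ℂ = μ * ⟪x, y⟫_ℂ := by
  calc ⟪x, F y⟫_ℂ = ⟪E x, F y⟫_ℂ := by rw [hE.apply_eq_self_of_mem_range hx]
    _ = ⟪x, (E * F * E) y⟫_ℂ := by
      rw [hE.inner_apply_left, mul_apply_eq_comp, mul_apply_eq_comp,
        hE.apply_eq_self_of_mem_range hy]
    _ = μ * ⟪x, y⟫_ℂ := by rw [hμ, inner_smul_right]

theorem inner_normalize_apply (hE : IsOrthogonalProjection E) (x u : H) :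
    ⟪‖E x‖⁻¹ • E x, u⟫_ℂ = ‖E x‖⁻¹ * ⟪x, E u⟫_ℂ := by
  rw [← Complex.coe_smul, inner_smul_left, Complex.conj_ofReal, hE.inner_apply_left]

end IsOrthogonalProjection

section Eigenbasis

variable {H : Type*} [NormedAddCommGroup H] [InnerProductSpace ℂ H] [CompleteSpace H]
  {E F : H →L[ℂ] H} {J : Type*} {e : J → H} {μ : J → ℂ}

theorem pairwise_inner_apply_apply_eq_zero (hE : IsOrthogonalProjection E)
    (hF : IsOrthogonalProjection F) (he : Orthonormal ℂ e)
    (heE : ∀ j, e j ∈ LinearMap.range (E : H →ₗ[ℂ] H))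
    (heig : ∀ j, (E * F * E) (e j) = μ j • e j) :
    Pairwise fun i j => ⟪F (e i), F (e j)⟫_ℂ = 0 := by
  intro i j hij
  rw [hF.inner_apply_apply, hE.inner_apply_eq_of_compression_eq_smul F (heE i) (heE j) (heig j),
    he.2 hij, mul_zero]

theorem topologicalClosure_span_normalize_apply_eq_range (hE : IsOrthogonalProjection E)
    (hF : IsOrthogonalProjection F)
    (hEf : ∀ f ∈ LinearMap.range (F : H →ₗ[ℂ] H), ‖f‖ = 1 → E f ≠ 0)
    (he_span : (span ℂ (Set.range e)).topologicalClosure = LinearMap.range (E : H →ₗ[ℂ] H))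
    (hFe : ∀ j, F (e j) ≠ 0) :
    (span ℂ (Set.range fun j => ‖F (e j)‖⁻¹ • F (e j))).topologicalClosure =
      LinearMap.range (F : H →ₗ[ℂ] H) := by
  refine Submodule.topologicalClosure_eq_of_orthogonal_inf_eq_bot hF.isClosed_range ?_ ?_
  · rw [Submodule.span_le]
    rintro _ ⟨j, rfl⟩
    exact Submodule.smul_of_tower_mem _ _ ⟨e j, rfl⟩
  · refine eq_bot_iff.mpr fun u ⟨hu_perp, hu⟩ => ?_
    have he_perp : u ∈ (LinearMap.range (E : H →ₗ[ℂ] H))ᗮ := by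
      rw [← he_span, Submodule.orthogonal_closure, Submodule.mem_orthogonal_span_range_iff]
      intro j
      have := Submodule.mem_orthogonal_span_range_iff.mp hu_perp j
      rw [hF.inner_normalize_apply, hF.apply_eq_self_of_mem_range hu] at this
      simpa [hFe j] using this
    rw [hE.orthogonal_range] at he_perp
    exact Submodule.disjoint_def.mp (Submodule.disjoint_ker_of_forall_norm_eq_one hEf) u hu he_perp

end Eigenbasis

theorem statement12_general {H : Type*} [NormedAddCommGroup H] [InnerProductSpace ℂ H] [CompleteSpace H]
    (E F : H →L[ℂ] H) (hE : IsOrthogonalProjection E) (hF : IsOrthogonalProjection F)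
    (hFe : ∀ e ∈ LinearMap.range (E : H →ₗ[ℂ] H), ‖e‖ = 1 → F e ≠ 0)
    (hEf : ∀ f ∈ LinearMap.range (F : H →ₗ[ℂ] H), ‖f‖ = 1 → E f ≠ 0)
    (hpp : ∃ (J : Type) (v : J → H) (μ : J → ℂ), Orthonormal ℂ v ∧
      (∀ j, v j ∈ LinearMap.range (E : H →ₗ[ℂ] H)) ∧
      (Submodule.span ℂ (Set.range v)).topologicalClosure =
        LinearMap.range (E : H →ₗ[ℂ] H) ∧
      ∀ j, (E * F * E) (v j) = μ j • v j) :
    ∃ (J : Type) (e f : J → H),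
      Orthonormal ℂ e ∧ (∀ j, e j ∈ LinearMap.range (E : H →ₗ[ℂ] H)) ∧
      (Submodule.span ℂ (Set.range e)).topologicalClosure =
        LinearMap.range (E : H →ₗ[ℂ] H) ∧
      (∀ j, F (e j) ≠ 0) ∧ (∀ j, f j = ‖F (e j)‖⁻¹ • F (e j)) ∧
      Orthonormal ℂ f ∧ (∀ j, f j ∈ LinearMap.range (F : H →ₗ[ℂ] H)) ∧
      (Submodule.span ℂ (Set.range f)).topologicalClosure =
        LinearMap.range (F : H →ₗ[ℂ] H) ∧
      (∀ j k, j ≠ k → rankOneProj (f j) * rankOneProj (e k) = 0) ∧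
      (∀ j, rankOneProj (f j) * rankOneProj (e j) ≠ 0) ∧
      (∀ g : J → H, Orthonormal ℂ g →
        (∀ j, g j ∈ LinearMap.range (F : H →ₗ[ℂ] H)) →
        (Submodule.span ℂ (Set.range g)).topologicalClosure =
          LinearMap.range (F : H →ₗ[ℂ] H) →
        (∀ j k, j ≠ k → rankOneProj (g j) * rankOneProj (e k) = 0) →
        (∀ j, rankOneProj (g j) * rankOneProj (e j) ≠ 0) →
        ∀ j, rankOneProj (g j) = rankOneProj (f j)) := by
  obtain ⟨J, e, μ, he, heE, he_span, heig⟩ := hpp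
  have hFe0 : ∀ j, F (e j) ≠ 0 := fun j => hFe _ (heE j) (he.1 j)
  have hf : Orthonormal ℂ fun j => ‖F (e j)‖⁻¹ • F (e j) :=
    orthonormal_normalize hFe0 (pairwise_inner_apply_apply_eq_zero hE hF he heE heig)
  have hf_span := topologicalClosure_span_normalize_apply_eq_range hE hF hEf he_span hFe0
  have hfF : ∀ j, ‖F (e j)‖⁻¹ • F (e j) ∈ LinearMap.range (F : H →ₗ[ℂ] H) := fun j =>
    hf_span ▸ Submodule.le_topologicalClosure _ (Submodule.subset_span ⟨j, rfl⟩)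
  refine ⟨J, e, _, he, heE, he_span, hFe0, fun _ => rfl, hf, hfF, hf_span, ?_, ?_, ?_⟩
  · intro j k hjk
    rw [rankOneProj_mul_eq_zero_iff (hf.ne_zero j) (he.ne_zero k), hF.inner_normalize_apply,
      hE.inner_apply_eq_of_compression_eq_smul F (heE j) (heE k) (heig k), he.2 hjk]
    simp
  · intro j
    rw [Ne, rankOneProj_mul_eq_zero_iff (hf.ne_zero j) (he.ne_zero j), hF.inner_normalize_apply,
      ← hF.inner_apply_apply]
    simp [hFe0 j]
  · intro g hg hgF _ hg_perp _ j
    refine hf.rankOneProj_eq_of_inner_eq_zero hf_span (hgF j) (hg.1 j) fun k hkj => ?_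
    have hgj_ek := (rankOneProj_mul_eq_zero_iff (hg.ne_zero j) (he.ne_zero k)).mp
      (hg_perp j k hkj.symm)
    rw [hF.inner_normalize_apply, hF.apply_eq_self_of_mem_range (hgF j),
      inner_eq_zero_symm.mp hgj_ek, mul_zero]

/-- Let `E, F` be orthogonal projections on a separable complex Hilbert space
whose ranges have the same Hilbert dimension (there is a linear isometric isomorphism between
them), with `E ∧ F = 0`, with `F e ≠ 0` for every unit vector `e ∈ ran E` and `E f ≠ 0` for
every unit vector `f ∈ ran F`, and such that `ran E` admits an orthonormal basis of
eigenvectors of `EFE`.  Then there is an orthonormal basis `{e_j}` of `ran E` such that the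
vectors `f_j := F e_j / ‖F e_j‖` form an orthonormal basis of `ran F` with
`P_{f_j} P_{e_k} = 0` for `j ≠ k` and `P_{f_j} P_{e_j} ≠ 0`; moreover, given `{P_{e_j}}`, the
decomposition `{P_{f_j}}` of `F` with these properties is unique. -/
theorem statement12 {H : Type*} [NormedAddCommGroup H] [InnerProductSpace ℂ H] [CompleteSpace H]
    [TopologicalSpace.SeparableSpace H]
    (E F : H →L[ℂ] H) (hE : IsOrthogonalProjection E) (hF : IsOrthogonalProjection F)
    (hdim : Nonempty
      (↥(LinearMap.range (E : H →ₗ[ℂ] H)) ≃ₗᵢ[ℂ] ↥(LinearMap.range (F : H →ₗ[ℂ] H))))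
    (hmeet : LinearMap.range (E : H →ₗ[ℂ] H) ⊓ LinearMap.range (F : H →ₗ[ℂ] H) = ⊥)
    (hFe : ∀ e ∈ LinearMap.range (E : H →ₗ[ℂ] H), ‖e‖ = 1 → F e ≠ 0)
    (hEf : ∀ f ∈ LinearMap.range (F : H →ₗ[ℂ] H), ‖f‖ = 1 → E f ≠ 0)
    (hpp : ∃ (J : Type) (v : J → H) (μ : J → ℂ), Orthonormal ℂ v ∧
      (∀ j, v j ∈ LinearMap.range (E : H →ₗ[ℂ] H)) ∧
      (Submodule.span ℂ (Set.range v)).topologicalClosure =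
        LinearMap.range (E : H →ₗ[ℂ] H) ∧
      ∀ j, (E * F * E) (v j) = μ j • v j) :
    ∃ (J : Type) (e f : J → H),
      Orthonormal ℂ e ∧ (∀ j, e j ∈ LinearMap.range (E : H →ₗ[ℂ] H)) ∧
      (Submodule.span ℂ (Set.range e)).topologicalClosure =
        LinearMap.range (E : H →ₗ[ℂ] H) ∧
      (∀ j, F (e j) ≠ 0) ∧ (∀ j, f j = ‖F (e j)‖⁻¹ • F (e j)) ∧
      Orthonormal ℂ f ∧ (∀ j, f j ∈ LinearMap.range (F : H →ₗ[ℂ] H)) ∧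
      (Submodule.span ℂ (Set.range f)).topologicalClosure =
        LinearMap.range (F : H →ₗ[ℂ] H) ∧
      (∀ j k, j ≠ k → rankOneProj (f j) * rankOneProj (e k) = 0) ∧
      (∀ j, rankOneProj (f j) * rankOneProj (e j) ≠ 0) ∧
      (∀ g : J → H, Orthonormal ℂ g →
        (∀ j, g j ∈ LinearMap.range (F : H →ₗ[ℂ] H)) →
        (Submodule.span ℂ (Set.range g)).topologicalClosure =
          LinearMap.range (F : H →ₗ[ℂ] H) →
        (∀ j k, j ≠ k → rankOneProj (g j) * rankOneProj (e k) = 0) →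
        (∀ j, rankOneProj (g j) * rankOneProj (e j) ≠ 0) →
        ∀ j, rankOneProj (g j) = rankOneProj (f j)) :=
  statement12_general E F hE hF hFe hEf hpp
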